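/- Let W ⊆ GL(V) be a finite complex reflection group, and let E be an irreducible reflection representation of W (every reflection of W acts as a reflection on E). Then both E and its dual E* are amenable, i.e. for every reflecting hyperplane H of W, C(H,E) := Σ_{j=0}^{n_H - 1} j · dim(e_{H,j} E) satisfies C(H,E) ≤ n_H - 1, where n_H is the order of the cyclic pointwise stabilizer W_H of H and e_{H,j} = (1/n_H) Σ_{w ∈ W_H} det(w)^{-j} w. -/

import Mathlib

/-- A (pseudo-)reflection of `ℂ^n`: a nonidentity linear automorphism fixing a
hyperplane pointwise. -/
def IsCplxReflection (n : ℕ) (g : (Fin n → ℂ) ≃ₗ[ℂ] (Fin n → ℂ)) : Prop :=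
  g ≠ 1 ∧ Module.finrank ℂ
    (LinearMap.ker (g.toLinearMap - LinearMap.id)) = n - 1

/-- The fixed space of a linear automorphism of `ℂ^n`. -/
noncomputable def fixSpace (n : ℕ) (g : (Fin n → ℂ) ≃ₗ[ℂ] (Fin n → ℂ)) : Submodule ℂ (Fin n → ℂ) :=
  LinearMap.ker (g.toLinearMap - LinearMap.id)

/-- The pointwise stabilizer `W_H` of a hyperplane `H` in `W` (a cyclic group, of
order `n_H`). -/
def hypStab (n : ℕ) (W : Subgroup ((Fin n → ℂ) ≃ₗ[ℂ] (Fin n → ℂ)))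
    (H : Submodule ℂ (Fin n → ℂ)) : Type :=
  {w : W // ∀ v ∈ H, (w : (Fin n → ℂ) ≃ₗ[ℂ] (Fin n → ℂ)) v = v}

section AuxDefs

open Module LinearMap

noncomputable def Ksub (n : ℕ) (W : Subgroup ((Fin n → ℂ) ≃ₗ[ℂ] (Fin n → ℂ)))
    (H : Submodule ℂ (Fin n → ℂ)) : Subgroup W where
  carrier := {w | ∀ v ∈ H, (w : (Fin n → ℂ) ≃ₗ[ℂ] (Fin n → ℂ)) v = v}
  one_mem' := fun v _ => rfl
  mul_mem' := by
    intro a b ha hb v hv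
    have h1 : ((a * b : W) : (Fin n → ℂ) ≃ₗ[ℂ] (Fin n → ℂ)) v
        = (a : (Fin n → ℂ) ≃ₗ[ℂ] (Fin n → ℂ)) ((b : (Fin n → ℂ) ≃ₗ[ℂ] (Fin n → ℂ)) v) := rfl
    rw [h1, hb v hv, ha v hv]
  inv_mem' := by
    intro a ha v hv
    have h2 : ((a⁻¹ : W) : (Fin n → ℂ) ≃ₗ[ℂ] (Fin n → ℂ))
        = ((a : W) : (Fin n → ℂ) ≃ₗ[ℂ] (Fin n → ℂ)).symm := rfl
    rw [h2, LinearEquiv.symm_apply_eq, ha v hv]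

noncomputable instance instGroupHypStab (n : ℕ) (W : Subgroup ((Fin n → ℂ) ≃ₗ[ℂ] (Fin n → ℂ)))
    (H : Submodule ℂ (Fin n → ℂ)) : Group (hypStab n W H) :=
  inferInstanceAs (Group (Ksub n W H))

instance instFiniteHypStab (n : ℕ) (W : Subgroup ((Fin n → ℂ) ≃ₗ[ℂ] (Fin n → ℂ)))
    [Finite W] (H : Submodule ℂ (Fin n → ℂ)) : Finite (hypStab n W H) :=
  inferInstanceAs (Finite {w : W // ∀ v ∈ H, (w : (Fin n → ℂ) ≃ₗ[ℂ] (Fin n → ℂ)) v = v})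

lemma det_ne_one_aux {n : ℕ} (hn : 1 ≤ n) (g : (Fin n → ℂ) ≃ₗ[ℂ] (Fin n → ℂ))
    (hg : g ≠ 1) (hker : finrank ℂ (LinearMap.ker (g.toLinearMap - LinearMap.id)) = n - 1)
    (N : ℕ) (hN : 0 < N) (hgN : g ^ N = 1) :
    LinearMap.det g.toLinearMap ≠ 1 := by
  classical
  set A : (Fin n → ℂ) →ₗ[ℂ] (Fin n → ℂ) := g.toLinearMap - LinearMap.id with hA
  have hAapp : ∀ x, A x = g x - x := fun x => rfl
  have hgapp : ∀ y, g y = y + A y := by intro y; rw [hAapp]; abel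
  have htot : finrank ℂ (Fin n → ℂ) = n := Module.finrank_fin_fun ℂ
  have hrank : finrank ℂ (LinearMap.range A) = 1 := by
    have h := LinearMap.finrank_range_add_finrank_ker A
    rw [htot, hker] at h; omega
  obtain ⟨u, huA, hu0⟩ : ∃ u, u ∈ LinearMap.range A ∧ u ≠ 0 := by
    apply Submodule.exists_mem_ne_zero_of_ne_bot
    intro hbot
    rw [hbot] at hrank; simp at hrank
  have hspan : Submodule.span ℂ {u} = LinearMap.range A := by
    apply Submodule.eq_of_le_of_finrank_eq
    · rwa [Submodule.span_singleton_le_iff_mem]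
    · rw [finrank_span_singleton hu0, hrank]
  obtain ⟨c, hc⟩ : ∃ c : ℂ, c • u = A u := by
    rw [← Submodule.mem_span_singleton, hspan]; exact LinearMap.mem_range_self A u
  rcases eq_or_ne c 0 with hc0 | hc0
  · -- nilpotent case: impossible since g has finite order and g ≠ 1
    exfalso
    have hA2 : ∀ x, A (A x) = 0 := by
      intro x
      obtain ⟨t, ht⟩ : ∃ t : ℂ, t • u = A x := by
        rw [← Submodule.mem_span_singleton, hspan]; exact LinearMap.mem_range_self A x
      rw [← ht, map_smul, ← hc, hc0, zero_smul, smul_zero]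
    have hpow : ∀ (k : ℕ) (x), (g ^ k) x = x + k • A x := by
      intro k
      induction k with
      | zero => intro x; simp
      | succ k ih =>
        intro x
        have hmul : (g ^ (k + 1)) x = (g ^ k) (g x) := by rw [pow_succ]; rfl
        have hAgx : A (g x) = A x := by rw [hgapp x, map_add, hA2, add_zero]
        rw [hmul, ih (g x), hAgx, hgapp x, succ_nsmul]
        abel
    have hAzero : ∀ x, A x = 0 := by
      intro x
      have h1 : (g ^ N) x = x := by rw [hgN]; rfl
      rw [hpow N x] at h1
      have h2 : N • A x = 0 := by
        have := add_eq_left.mp h1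
        exact this
      rw [← Nat.cast_smul_eq_nsmul ℂ] at h2
      have hNc : (N : ℂ) ≠ 0 := Nat.cast_ne_zero.mpr hN.ne'
      exact (smul_eq_zero.mp h2).resolve_left hNc
    apply hg
    apply LinearEquiv.toLinearMap_injective
    apply LinearMap.ext
    intro x
    have := hAzero x
    rw [hAapp] at this
    simpa [sub_eq_zero] using this
  · -- genuine reflection case: det g = 1 + c ≠ 1
    have hgu : g u = (1 + c) • u := by
      have h := hc; rw [hAapp] at h
      have h2 : g u = c • u + u := sub_eq_iff_eq_add.mp h.symm
      rw [h2, add_smul, one_smul, add_comm]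
    have hinfbot : (LinearMap.ker A) ⊓ (Submodule.span ℂ {u}) = ⊥ := by
      rw [eq_bot_iff]
      intro x hx
      obtain ⟨hx1, hx2⟩ := Submodule.mem_inf.mp hx
      obtain ⟨t, ht⟩ := Submodule.mem_span_singleton.mp hx2
      rw [LinearMap.mem_ker, ← ht, map_smul, ← hc, smul_smul] at hx1
      rcases smul_eq_zero.mp hx1 with h | h
      · rcases mul_eq_zero.mp h with h | h
        · simp [← ht, h]
        · exact absurd h hc0
      · exact absurd h hu0
    have hcompl : IsCompl (LinearMap.ker A) (Submodule.span ℂ {u}) := by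
      constructor
      · exact disjoint_iff.mpr hinfbot
      · rw [codisjoint_iff]
        apply Submodule.eq_top_of_finrank_eq
        have hsum := Submodule.finrank_sup_add_finrank_inf_eq (LinearMap.ker A)
          (Submodule.span ℂ {u})
        rw [hinfbot, hker, finrank_span_singleton hu0] at hsum
        simp only [finrank_bot] at hsum
        rw [htot]
        omega
    intro hdet1
    set e := Submodule.prodEquivOfIsCompl (LinearMap.ker A) (Submodule.span ℂ {u}) hcompl
      with he
    set B := LinearMap.prodMap (LinearMap.id : LinearMap.ker A →ₗ[ℂ] LinearMap.ker A)
      ((1 + c) • LinearMap.id : Submodule.span ℂ {u} →ₗ[ℂ] Submodule.span ℂ {u}) with hB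
    have hconj : g.toLinearMap = (e : _ →ₗ[ℂ] _) ∘ₗ B ∘ₗ (e.symm : _ →ₗ[ℂ] _) := by
      apply LinearMap.ext
      intro x
      set p := e.symm x with hp
      have hxp : (p.1 : Fin n → ℂ) + (p.2 : Fin n → ℂ) = x := by
        have h1 : e p = x := e.apply_symm_apply x
        have h2 : e p = (p.1 : Fin n → ℂ) + (p.2 : Fin n → ℂ) := rfl
        rw [← h1, h2]
      have hrhs : ((e : _ →ₗ[ℂ] _) ∘ₗ B ∘ₗ (e.symm : _ →ₗ[ℂ] _)) x
          = (p.1 : Fin n → ℂ) + (1 + c) • (p.2 : Fin n → ℂ) := by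
        have hBp : B p = (p.1, (1 + c) • p.2) := rfl
        have : ((e : _ →ₗ[ℂ] _) ∘ₗ B ∘ₗ (e.symm : _ →ₗ[ℂ] _)) x = e (B p) := rfl
        rw [this, hBp]
        rfl
      rw [hrhs]
      have hg1 : g (p.1 : Fin n → ℂ) = (p.1 : Fin n → ℂ) := by
        have hm := p.1.2
        rw [LinearMap.mem_ker, hAapp] at hm
        exact sub_eq_zero.mp hm
      have hg2 : g (p.2 : Fin n → ℂ) = (1 + c) • (p.2 : Fin n → ℂ) := by
        obtain ⟨t, ht⟩ := Submodule.mem_span_singleton.mp p.2.2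
        rw [← ht, map_smul, hgu, smul_comm]
      calc g.toLinearMap x = g ((p.1 : Fin n → ℂ) + (p.2 : Fin n → ℂ)) := by rw [hxp]; rfl
        _ = g (p.1 : Fin n → ℂ) + g (p.2 : Fin n → ℂ) := map_add _ _ _
        _ = (p.1 : Fin n → ℂ) + (1 + c) • (p.2 : Fin n → ℂ) := by rw [hg1, hg2]
    have hdetB : LinearMap.det B = 1 + c := by
      have b1 := Module.finBasis ℂ (LinearMap.ker A)
      have b2 := Module.finBasis ℂ (Submodule.span ℂ {u})
      rw [hB, ← LinearMap.det_toMatrix (b1.prod b2), LinearMap.toMatrix_prodMap,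
        Matrix.det_fromBlocks_zero₁₂, LinearMap.det_toMatrix, LinearMap.det_toMatrix,
        LinearMap.det_id, LinearMap.det_smul, LinearMap.det_id, finrank_span_singleton hu0,
        pow_one, one_mul, mul_one]
    rw [hconj, LinearMap.det_conj, hdetB] at hdet1
    exact hc0 (by linear_combination hdet1)

lemma fix_rank {n : ℕ} (hn : 1 ≤ n) {H : Submodule ℂ (Fin n → ℂ)}
    (hHrank : finrank ℂ H = n - 1) {g : (Fin n → ℂ) ≃ₗ[ℂ] (Fin n → ℂ)}
    (hg : g ≠ 1) (hfix : ∀ v ∈ H, g v = v) :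
    finrank ℂ (LinearMap.ker (g.toLinearMap - LinearMap.id)) = n - 1 := by
  have htot : finrank ℂ (Fin n → ℂ) = n := Module.finrank_fin_fun ℂ
  have hle : H ≤ LinearMap.ker (g.toLinearMap - LinearMap.id) := by
    intro v hv
    rw [LinearMap.mem_ker, LinearMap.sub_apply, LinearMap.id_apply]
    have : g v = v := hfix v hv
    simp [this]
  have hne : LinearMap.ker (g.toLinearMap - LinearMap.id) ≠ ⊤ := by
    intro h
    apply hg
    apply LinearEquiv.toLinearMap_injective
    apply LinearMap.ext
    intro x
    have : x ∈ LinearMap.ker (g.toLinearMap - LinearMap.id) := h ▸ Submodule.mem_top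
    rw [LinearMap.mem_ker, LinearMap.sub_apply, LinearMap.id_apply, sub_eq_zero] at this
    simpa using this
  have hlt : finrank ℂ (LinearMap.ker (g.toLinearMap - LinearMap.id)) < n := by
    have := Submodule.finrank_lt hne
    omega
  have hge : n - 1 ≤ finrank ℂ (LinearMap.ker (g.toLinearMap - LinearMap.id)) := by
    have := Submodule.finrank_mono hle
    omega
  omega

lemma count_le {X : Type} [AddCommGroup X] [Module ℂ X] [FiniteDimensional ℂ X]
    (m : ℕ) (δ : ℂ) (hδ : ∀ j < m, ∀ j' < m, δ ^ j = δ ^ j' → j = j')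
    (F : Module.End ℂ X) (e : ℕ → Module.End ℂ X)
    (hcomm : ∀ j, F * e j = δ ^ j • e j)
    (hL : finrank ℂ (LinearMap.range (F - 1)) ≤ 1) :
    ∑ j ∈ Finset.range m, j * finrank ℂ (LinearMap.range (e j)) ≤ m - 1 := by
  classical
  set L := LinearMap.range (F - 1) with hLdef
  set U : ℕ → Submodule ℂ X := fun j => LinearMap.ker (F - δ ^ j • 1) with hU
  have hrange : ∀ j, LinearMap.range (e j) ≤ U j := by
    intro j x hx
    obtain ⟨y, hy⟩ := hx
    have h1 : F (e j y) = δ ^ j • e j y := by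
      have := congrArg (fun (T : Module.End ℂ X) => T y) (hcomm j)
      simpa using this
    simp only [hU, LinearMap.mem_ker, LinearMap.sub_apply, LinearMap.smul_apply,
      Module.End.one_apply, ← hy, h1, sub_self]
  have hUL : ∀ j, δ ^ j ≠ 1 → U j ≤ L := by
    intro j hj v hv
    simp only [hU, LinearMap.mem_ker, LinearMap.sub_apply, LinearMap.smul_apply,
      Module.End.one_apply, sub_eq_zero] at hv
    have h1 : (F - 1) v = (δ ^ j - 1) • v := by
      simp only [LinearMap.sub_apply, Module.End.one_apply, hv, sub_smul, one_smul]
    have h2 : v = (δ ^ j - 1)⁻¹ • ((F - 1) v) := by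
      rw [h1, smul_smul, inv_mul_cancel₀ (sub_ne_zero.mpr hj), one_smul]
    rw [hLdef, h2]
    exact Submodule.smul_mem _ _ (LinearMap.mem_range_self _ v)
  have hUeig : ∀ j (v : X), v ∈ U j → F v = δ ^ j • v := by
    intro j v hv
    simp only [hU, LinearMap.mem_ker, LinearMap.sub_apply, LinearMap.smul_apply,
      Module.End.one_apply, sub_eq_zero] at hv
    exact hv
  set r : ℕ → ℕ := fun j => finrank ℂ (LinearMap.range (e j)) with hr
  have hδj1 : ∀ j, 0 < j → j < m → δ ^ j ≠ 1 := by
    intro j hj0 hjm h1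
    have := hδ j hjm 0 (by omega) (by simpa using h1)
    omega
  have hr1 : ∀ j, 0 < j → j < m → r j ≤ 1 := by
    intro j hj0 hjm
    calc r j ≤ finrank ℂ (U j) := Submodule.finrank_mono (hrange j)
      _ ≤ finrank ℂ L := Submodule.finrank_mono (hUL j (hδj1 j hj0 hjm))
      _ ≤ 1 := hL
  by_cases hex : ∃ j₀ ∈ Finset.range m, j₀ ≠ 0 ∧ r j₀ ≠ 0
  · obtain ⟨j₀, hj₀m, hj₀0, hrj₀⟩ := hex
    rw [Finset.mem_range] at hj₀m
    have hsingle : ∑ j ∈ Finset.range m, j * r j = j₀ * r j₀ := by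
      apply Finset.sum_eq_single
      · intro j hjm hne
        rw [Finset.mem_range] at hjm
        rcases Nat.eq_zero_or_pos j with h0 | hpos
        · rw [h0, zero_mul]
        · -- show r j = 0
          by_contra hrj
          have hrj' : r j ≠ 0 := by
            intro h; apply hrj; rw [h, mul_zero]
          -- both U j and U j₀ are nonzero, contained in L of rank ≤ 1
          have hUj : LinearMap.range (e j) ≠ ⊥ := by
            intro h; exact hrj' (Submodule.finrank_eq_zero.mpr h)
          have hUj₀ : LinearMap.range (e j₀) ≠ ⊥ := by
            intro h; exact hrj₀ (Submodule.finrank_eq_zero.mpr h)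
          obtain ⟨v, hv, hv0⟩ := Submodule.exists_mem_ne_zero_of_ne_bot hUj
          obtain ⟨v', hv', hv'0⟩ := Submodule.exists_mem_ne_zero_of_ne_bot hUj₀
          -- both v, v' lie in L which has rank ≤ 1
          have hvU : v ∈ U j := hrange j hv
          have hv'U : v' ∈ U j₀ := hrange j₀ hv'
          have hvL : v ∈ L := hUL j (hδj1 j hpos hjm) hvU
          have hv'L : v' ∈ L := hUL j₀ (hδj1 j₀ (Nat.pos_of_ne_zero hj₀0) hj₀m) hv'U
          -- span v = L = span v'
          have hspanv : Submodule.span ℂ {v} = L := by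
            apply Submodule.eq_of_le_of_finrank_eq
            · rwa [Submodule.span_singleton_le_iff_mem]
            · rw [finrank_span_singleton hv0]
              refine le_antisymm ?_ hL
              rw [Nat.one_le_iff_ne_zero]
              intro h
              have : L = ⊥ := Submodule.finrank_eq_zero.mp h
              rw [this] at hvL
              exact hv0 hvL
          have hv'span : v' ∈ Submodule.span ℂ {v} := by rw [hspanv]; exact hv'L
          obtain ⟨t, ht⟩ := Submodule.mem_span_singleton.mp hv'span
          have ht0 : t ≠ 0 := by
            intro h; apply hv'0; rw [← ht, h, zero_smul]
          -- v' is an eigenvector for both δ^j and δ^j₀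
          have h1 : F v' = δ ^ j₀ • v' := hUeig j₀ v' hv'U
          have h2 : F v' = δ ^ j • v' := by
            rw [← ht, map_smul, hUeig j v hvU, smul_smul, smul_smul, mul_comm]
          have h3 : δ ^ j = δ ^ j₀ := by
            have h4 : (δ ^ j - δ ^ j₀) • v' = 0 := by
              rw [sub_smul, ← h1, ← h2, sub_self]
            rcases smul_eq_zero.mp h4 with h | h
            · exact sub_eq_zero.mp h
            · exact absurd h hv'0
          exact hne (hδ j hjm j₀ hj₀m h3)
      · intro h
        exact absurd (Finset.mem_range.mpr hj₀m) h
    rw [hsingle]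
    calc j₀ * r j₀ ≤ j₀ * 1 := Nat.mul_le_mul_left _ (hr1 j₀ (Nat.pos_of_ne_zero hj₀0) hj₀m)
      _ = j₀ := mul_one _
      _ ≤ m - 1 := by omega
  · push_neg at hex
    have : ∑ j ∈ Finset.range m, j * r j = 0 := by
      apply Finset.sum_eq_zero
      intro j hj
      rcases Nat.eq_zero_or_pos j with h0 | hpos
      · rw [h0, zero_mul]
      · have := hex j hj (by omega)
        rw [this, mul_zero]
    rw [this]
    omega

/-- Key commutation: left translation by `s` in the averaged operator. -/

lemma key_comm {X : Type} [AddCommGroup X] [Module ℂ X] {K : Type} [Group K] [Fintype K]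
    (T : K →* Module.End ℂ X) (c : K → ℂ) (s : K) (a d : ℂ)
    (hc : ∀ w, c (s⁻¹ * w) = d * c w) :
    T s * (a • ∑ w : K, c w • T w) = d • (a • ∑ w : K, c w • T w) := by
  rw [mul_smul_comm, Finset.mul_sum]
  have h1 : ∀ w : K, T s * (c w • T w) = c w • T (s * w) := by
    intro w
    rw [mul_smul_comm, ← map_mul]
  simp only [h1]
  have h2 : ∑ w : K, c w • T (s * w) = ∑ w : K, c (s⁻¹ * w) • T w := by
    rw [← Equiv.sum_comp (Equiv.mulLeft s) (fun w => c (s⁻¹ * w) • T w)]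
    apply Finset.sum_congr rfl
    intro w _
    simp [Equiv.mulLeft]
  rw [h2]
  have h3 : ∑ w : K, (d * c w) • T w = d • ∑ w : K, c w • T w := by
    rw [Finset.smul_sum]
    apply Finset.sum_congr rfl
    intro w _
    rw [smul_smul]
  simp only [hc]
  rw [h3, smul_comm a d]

end AuxDefs

/-- The idempotent `e_{H,j} = (1/n_H) Σ_{w ∈ W_H} det(w)^{-j} w` acting on a
representation `E` of `W` through `ρ`. -/
noncomputable def idemOp (n : ℕ) (W : Subgroup ((Fin n → ℂ) ≃ₗ[ℂ] (Fin n → ℂ)))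
    (H : Submodule ℂ (Fin n → ℂ)) (E : Type) [AddCommGroup E] [Module ℂ E]
    (ρ : W →* (E ≃ₗ[ℂ] E)) (j : ℕ) : Module.End ℂ E :=
  ((Nat.card (hypStab n W H) : ℂ))⁻¹ •
    ∑ᶠ w : hypStab n W H,
      ((LinearMap.det ((w.1 : (Fin n → ℂ) ≃ₗ[ℂ] (Fin n → ℂ)).toLinearMap))⁻¹ ^ j) •
        (ρ w.1).toLinearMap

/-- The idempotent `e_{H,j}` acting on the dual representation `E*`
(on which `w` acts by the contragredient `(ρ w⁻¹)*`). -/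
noncomputable def idemOpDual (n : ℕ) (W : Subgroup ((Fin n → ℂ) ≃ₗ[ℂ] (Fin n → ℂ)))
    (H : Submodule ℂ (Fin n → ℂ)) (E : Type) [AddCommGroup E] [Module ℂ E]
    (ρ : W →* (E ≃ₗ[ℂ] E)) (j : ℕ) : Module.End ℂ (Module.Dual ℂ E) :=
  ((Nat.card (hypStab n W H) : ℂ))⁻¹ •
    ∑ᶠ w : hypStab n W H,
      ((LinearMap.det ((w.1 : (Fin n → ℂ) ≃ₗ[ℂ] (Fin n → ℂ)).toLinearMap))⁻¹ ^ j) •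
        (LinearEquiv.dualMap (ρ (w.1)⁻¹)).toLinearMap

set_option maxHeartbeats 1000000 in
open Module LinearMap in
/-- Let `W ⊆ GL(ℂ^n)` be a finite complex reflection group, and `E` an irreducible
reflection representation of `W` (every reflection of `W` acts as a reflection on `E`).
Then `E` and its dual `E*` are amenable: for every reflecting hyperplane `H`,
`C(H,E) = Σ_j j·dim(e_{H,j}E) ≤ n_H - 1`, and similarly for `E*`. -/
theorem stmt9 (n : ℕ) (W : Subgroup ((Fin n → ℂ) ≃ₗ[ℂ] (Fin n → ℂ))) [Finite W]
    (hgen : W = Subgroup.closure {g | g ∈ W ∧ IsCplxReflection n g})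
    (E : Type) [AddCommGroup E] [Module ℂ E] [FiniteDimensional ℂ E]
    (ρ : W →* (E ≃ₗ[ℂ] E))
    (hirr : ∀ U : Submodule ℂ E, (∀ w : W, ∀ v ∈ U, ρ w v ∈ U) → U = ⊥ ∨ U = ⊤)
    (hreflrep : ∀ w : W, IsCplxReflection n w →
      (ρ w ≠ 1 ∧ Module.finrank ℂ
        (LinearMap.ker ((ρ w).toLinearMap - LinearMap.id)) = Module.finrank ℂ E - 1))
    (H : Submodule ℂ (Fin n → ℂ))
    (hH : ∃ g ∈ W, IsCplxReflection n g ∧ H = fixSpace n g) :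
    (∑ j ∈ Finset.range (Nat.card (hypStab n W H)),
        j * Module.finrank ℂ (LinearMap.range (idemOp n W H E ρ j))
      ≤ Nat.card (hypStab n W H) - 1) ∧
    (∑ j ∈ Finset.range (Nat.card (hypStab n W H)),
        j * Module.finrank ℂ (LinearMap.range (idemOpDual n W H E ρ j))
      ≤ Nat.card (hypStab n W H) - 1) := by
  classical
  obtain ⟨g, hgW, hgrefl, hHfix⟩ := hH
  -- n ≥ 1
  have hn : 1 ≤ n := by
    by_contra h
    have hn0 : n = 0 := by omega
    subst hn0
    have : Subsingleton (Fin 0 → ℂ) := inferInstance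
    exact hgrefl.1 (LinearEquiv.ext fun x => Subsingleton.elim _ _)
  have hHrank : finrank ℂ H = n - 1 := by rw [hHfix]; exact hgrefl.2
  letI : Fintype (hypStab n W H) := Fintype.ofFinite _
  set m := Nat.card (hypStab n W H) with hm
  have hmcard : m = Fintype.card (hypStab n W H) := Nat.card_eq_fintype_card
  -- the determinant monoid homomorphism on the stabilizer
  set φ : hypStab n W H →* ℂ :=
    { toFun := fun w => LinearMap.det ((w.1 : (Fin n → ℂ) ≃ₗ[ℂ] (Fin n → ℂ)).toLinearMap)
      map_one' := by
        show LinearMap.det (((1 : W) : (Fin n → ℂ) ≃ₗ[ℂ] (Fin n → ℂ)).toLinearMap) = 1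
        show LinearMap.det ((1 : (Fin n → ℂ) ≃ₗ[ℂ] (Fin n → ℂ)).toLinearMap) = 1
        rw [show ((1 : (Fin n → ℂ) ≃ₗ[ℂ] (Fin n → ℂ)).toLinearMap) = LinearMap.id from rfl]
        exact LinearMap.det_id
      map_mul' := by
        intro a b
        show LinearMap.det (((a.1 * b.1 : W) : (Fin n → ℂ) ≃ₗ[ℂ] (Fin n → ℂ)).toLinearMap) = _
        rw [show (((a.1 * b.1 : W) : (Fin n → ℂ) ≃ₗ[ℂ] (Fin n → ℂ)).toLinearMap)
          = ((a.1 : (Fin n → ℂ) ≃ₗ[ℂ] (Fin n → ℂ)).toLinearMap)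
            * ((b.1 : (Fin n → ℂ) ≃ₗ[ℂ] (Fin n → ℂ)).toLinearMap) from rfl]
        rw [map_mul] } with hφdef
  -- determinant is injective on the stabilizer
  have hdetW : ∀ w : hypStab n W H,
      LinearMap.det ((w.1 : (Fin n → ℂ) ≃ₗ[ℂ] (Fin n → ℂ)).toLinearMap) = 1 → w = 1 := by
    intro w hw
    by_contra hne
    have hval : ((w.1 : W) : (Fin n → ℂ) ≃ₗ[ℂ] (Fin n → ℂ)) ≠ 1 := by
      intro h
      exact hne (Subtype.ext (Subtype.ext h))
    have hker := fix_rank hn hHrank hval w.2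
    have hNpos : 0 < Nat.card W := Nat.card_pos
    have hpowN : ((w.1 : W) : (Fin n → ℂ) ≃ₗ[ℂ] (Fin n → ℂ)) ^ (Nat.card W) = 1 := by
      have h1 : (w.1 : W) ^ (Nat.card W) = 1 := pow_card_eq_one'
      have h2 : (((w.1 : W) ^ (Nat.card W) : W) : (Fin n → ℂ) ≃ₗ[ℂ] (Fin n → ℂ))
          = ((w.1 : W) : (Fin n → ℂ) ≃ₗ[ℂ] (Fin n → ℂ)) ^ (Nat.card W) :=
        SubgroupClass.coe_pow _ _
      rw [← h2, h1]
      rfl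
    exact det_ne_one_aux hn _ hval hker (Nat.card W) hNpos hpowN hw
  have hφinj : Function.Injective φ := by
    intro a b hab
    have h1 : φ (a * b⁻¹) = 1 := by
      rw [map_mul, hab, ← map_mul, mul_inv_cancel, map_one]
    have h2 : a * b⁻¹ = 1 := hdetW (a * b⁻¹) h1
    exact mul_inv_eq_one.mp h2
  haveI : IsCyclic (hypStab n W H) := isCyclic_of_subgroup_isDomain φ hφinj
  obtain ⟨s, hs⟩ := IsCyclic.exists_generator (α := hypStab n W H)
  have horder : orderOf s = m := orderOf_eq_card_of_forall_mem_zpowers hs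
  set δ : ℂ := LinearMap.det ((s.1 : (Fin n → ℂ) ≃ₗ[ℂ] (Fin n → ℂ)).toLinearMap) with hδdef
  have hδunit : IsUnit δ := LinearEquiv.isUnit_det' _
  have hδ0 : δ ≠ 0 := hδunit.ne_zero
  -- powers of δ below m are distinct
  have hpowne : ∀ k, 0 < k → k < m → δ ^ k ≠ 1 := by
    intro k hk0 hkm hone
    have h1 : φ (s ^ k) = 1 := by rw [map_pow]; exact hone
    have h2 : s ^ k = 1 := hdetW (s ^ k) h1
    have h3 := orderOf_dvd_of_pow_eq_one h2
    rw [horder] at h3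
    exact absurd (Nat.le_of_dvd hk0 h3) (by omega)
  have hδinj : ∀ j < m, ∀ j' < m, δ ^ j = δ ^ j' → j = j' := by
    have haux : ∀ j j', j < j' → j' < m → δ ^ j = δ ^ j' → False := by
      intro j j' hlt hj'm he
      apply hpowne (j' - j) (by omega) (by omega)
      have hδj : δ ^ j ≠ 0 := pow_ne_zero _ hδ0
      have key : δ ^ (j' - j) * δ ^ j = 1 * δ ^ j := by
        rw [one_mul, ← pow_add, show j' - j + j = j' from by omega]
        exact he.symm
      exact mul_right_cancel₀ hδj key
    intro j hj j' hj' he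
    rcases lt_trichotomy j j' with h | h | h
    · exact absurd (haux j j' h hj' he) (fun x => x)
    · exact h
    · exact absurd (haux j' j h hj he.symm) (fun x => x)
  -- the coefficient function
  set c : ℕ → hypStab n W H → ℂ := fun j w =>
    (LinearMap.det ((w.1 : (Fin n → ℂ) ≃ₗ[ℂ] (Fin n → ℂ)).toLinearMap))⁻¹ ^ j with hcdef
  have hcinv : ∀ j (w : hypStab n W H), c j (s⁻¹ * w) = δ ^ j * c j w := by
    intro j w
    have hdet_mul : LinearMap.det (((s⁻¹ * w).1 : (Fin n → ℂ) ≃ₗ[ℂ] (Fin n → ℂ)).toLinearMap)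
        = LinearMap.det (((s⁻¹ : hypStab n W H).1 : (Fin n → ℂ) ≃ₗ[ℂ] (Fin n → ℂ)).toLinearMap)
          * LinearMap.det ((w.1 : (Fin n → ℂ) ≃ₗ[ℂ] (Fin n → ℂ)).toLinearMap) := by
      rw [show (((s⁻¹ * w).1 : W) : (Fin n → ℂ) ≃ₗ[ℂ] (Fin n → ℂ)).toLinearMap
        = (((s⁻¹ : hypStab n W H).1 : W) : (Fin n → ℂ) ≃ₗ[ℂ] (Fin n → ℂ)).toLinearMap
          * ((w.1 : (Fin n → ℂ) ≃ₗ[ℂ] (Fin n → ℂ)).toLinearMap) from rfl]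
      rw [map_mul]
    have hdetinv : LinearMap.det (((s⁻¹ : hypStab n W H).1 :
        (Fin n → ℂ) ≃ₗ[ℂ] (Fin n → ℂ)).toLinearMap) = δ⁻¹ := by
      have h1 : φ s⁻¹ * φ s = 1 := by rw [← map_mul, inv_mul_cancel, map_one]
      exact eq_inv_of_mul_eq_one_left h1
    show (LinearMap.det (((s⁻¹ * w).1 : (Fin n → ℂ) ≃ₗ[ℂ] (Fin n → ℂ)).toLinearMap))⁻¹ ^ j
      = δ ^ j * (LinearMap.det ((w.1 : (Fin n → ℂ) ≃ₗ[ℂ] (Fin n → ℂ)).toLinearMap))⁻¹ ^ j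
    rw [hdet_mul, hdetinv, mul_inv, inv_inv, mul_pow]
  -- the representation as a monoid hom into endomorphisms
  set TE : hypStab n W H →* Module.End ℂ E :=
    { toFun := fun w => (ρ w.1).toLinearMap
      map_one' := by
        show (ρ (1 : W)).toLinearMap = 1
        rw [map_one]
        rfl
      map_mul' := by
        intro a b
        show (ρ (a.1 * b.1)).toLinearMap = _
        rw [map_mul]
        rfl } with hTEdef
  set TD : hypStab n W H →* Module.End ℂ (Module.Dual ℂ E) :=
    { toFun := fun w => (LinearEquiv.dualMap (ρ (w.1)⁻¹)).toLinearMap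
      map_one' := by
        apply LinearMap.ext; intro ψ; apply LinearMap.ext; intro x
        show ψ ((ρ ((1 : hypStab n W H).1)⁻¹) x) = ψ x
        rw [show ((1 : hypStab n W H).1)⁻¹ = (1 : W) from rfl, map_one]
        rfl
      map_mul' := by
        intro a b
        apply LinearMap.ext; intro ψ; apply LinearMap.ext; intro x
        show ψ ((ρ ((a * b).1)⁻¹) x) = ψ ((ρ (b.1)⁻¹) ((ρ (a.1)⁻¹) x))
        rw [show ((a * b).1)⁻¹ = (b.1)⁻¹ * (a.1)⁻¹ from by
          rw [show (a * b).1 = a.1 * b.1 from rfl, mul_inv_rev]]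
        rw [map_mul]
        rfl } with hTDdef
  -- rewriting the idempotents as finite sums
  have hidemE : ∀ j, idemOp n W H E ρ j = (m : ℂ)⁻¹ • ∑ w : hypStab n W H, c j w • TE w := by
    intro j
    unfold idemOp
    rw [finsum_eq_sum_of_fintype]
    rfl
  have hidemD : ∀ j, idemOpDual n W H E ρ j
      = (m : ℂ)⁻¹ • ∑ w : hypStab n W H, c j w • TD w := by
    intro j
    unfold idemOpDual
    rw [finsum_eq_sum_of_fintype]
    rfl
  -- commutation relations
  have hcommE : ∀ j, TE s * idemOp n W H E ρ j = δ ^ j • idemOp n W H E ρ j := by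
    intro j
    rw [hidemE j]
    exact key_comm TE (c j) s _ (δ ^ j) (hcinv j)
  have hcommD : ∀ j, TD s * idemOpDual n W H E ρ j = δ ^ j • idemOpDual n W H E ρ j := by
    intro j
    rw [hidemD j]
    exact key_comm TD (c j) s _ (δ ^ j) (hcinv j)
  -- rank bounds
  have hdE : 1 ≤ finrank ℂ E ∨ s = 1 := by
    by_cases hs1 : s = 1
    · exact Or.inr hs1
    · left
      by_contra hd
      have hd0 : finrank ℂ E = 0 := by omega
      have hsub : Subsingleton E := Module.finrank_zero_iff (R := ℂ) (M := E) |>.mp hd0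
      have hsne : ((s.1 : W) : (Fin n → ℂ) ≃ₗ[ℂ] (Fin n → ℂ)) ≠ 1 := by
        intro h; exact hs1 (Subtype.ext (Subtype.ext h))
      have hrefl : IsCplxReflection n (s.1 : (Fin n → ℂ) ≃ₗ[ℂ] (Fin n → ℂ)) :=
        ⟨hsne, fix_rank hn hHrank hsne s.2⟩
      exact (hreflrep s.1 hrefl).1 (LinearEquiv.ext fun x => Subsingleton.elim _ _)
  have hLE : finrank ℂ (LinearMap.range (TE s - 1)) ≤ 1 := by
    by_cases hs1 : s = 1
    · have h0 : TE s - 1 = 0 := by rw [hs1, map_one, sub_self]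
      rw [h0, LinearMap.range_zero]
      simp
    · have hsne : ((s.1 : W) : (Fin n → ℂ) ≃ₗ[ℂ] (Fin n → ℂ)) ≠ 1 := by
        intro h; exact hs1 (Subtype.ext (Subtype.ext h))
      have hrefl : IsCplxReflection n (s.1 : (Fin n → ℂ) ≃ₗ[ℂ] (Fin n → ℂ)) :=
        ⟨hsne, fix_rank hn hHrank hsne s.2⟩
      obtain ⟨hρne, hkerE⟩ := hreflrep s.1 hrefl
      have hd : 1 ≤ finrank ℂ E := hdE.resolve_right hs1
      have heq : TE s - 1 = (ρ s.1).toLinearMap - LinearMap.id := rfl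
      rw [heq]
      have h := LinearMap.finrank_range_add_finrank_ker ((ρ s.1).toLinearMap - LinearMap.id)
      rw [hkerE] at h
      omega
  have hLD : finrank ℂ (LinearMap.range (TD s - 1)) ≤ 1 := by
    by_cases hs1 : s = 1
    · have h0 : TD s - 1 = 0 := by rw [hs1, map_one, sub_self]
      rw [h0, LinearMap.range_zero]
      simp
    · have hsne : ((s.1 : W) : (Fin n → ℂ) ≃ₗ[ℂ] (Fin n → ℂ)) ≠ 1 := by
        intro h; exact hs1 (Subtype.ext (Subtype.ext h))
      have hrefl : IsCplxReflection n (s.1 : (Fin n → ℂ) ≃ₗ[ℂ] (Fin n → ℂ)) :=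
        ⟨hsne, fix_rank hn hHrank hsne s.2⟩
      obtain ⟨hρne, hkerE⟩ := hreflrep s.1 hrefl
      have hd : 1 ≤ finrank ℂ E := hdE.resolve_right hs1
      -- the kernel of ρ(s⁻¹) - id agrees with that of ρ(s) - id
      have hkereq : LinearMap.ker ((ρ (s.1)⁻¹).toLinearMap - LinearMap.id)
          = LinearMap.ker ((ρ s.1).toLinearMap - LinearMap.id) := by
        ext v
        simp only [LinearMap.mem_ker, LinearMap.sub_apply, LinearMap.id_apply, sub_eq_zero]
        have hval : (ρ (s.1)⁻¹) = (ρ s.1).symm := by rw [map_inv]; rfl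
        rw [hval]
        constructor
        · intro h
          show (ρ s.1).toLinearMap v = v
          conv_lhs => rw [← h]
          show (ρ s.1) ((ρ s.1).symm v) = v
          exact (ρ s.1).apply_symm_apply v
        · intro h
          show (ρ s.1).symm v = v
          conv_lhs => rw [← h]
          exact (ρ s.1).symm_apply_apply v
      have hkerdual : finrank ℂ (LinearMap.ker ((ρ (s.1)⁻¹).toLinearMap - LinearMap.id))
          = finrank ℂ E - 1 := by rw [hkereq]; exact hkerE
      have hG1 : TD s - 1 = LinearMap.dualMap ((ρ (s.1)⁻¹).toLinearMap - LinearMap.id) := by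
        apply LinearMap.ext; intro ψ; apply LinearMap.ext; intro x
        rw [LinearMap.dualMap_apply]
        simp only [LinearMap.sub_apply, LinearMap.id_apply, Module.End.one_apply, map_sub]
        rfl
      rw [hG1, LinearMap.finrank_range_dualMap_eq_finrank_range]
      have h := LinearMap.finrank_range_add_finrank_ker ((ρ (s.1)⁻¹).toLinearMap - LinearMap.id)
      rw [hkerdual] at h
      omega
  constructor
  · exact count_le m δ hδinj (TE s) (fun j => idemOp n W H E ρ j) hcommE hLE
  · exact count_le m δ hδinj (TD s) (fun j => idemOpDual n W H E ρ j) hcommD hLD
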